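/- arXiv:1508.03747 — 3 statements merged into one kernel-verified Lean document; each statement's English description precedes it below -/
import Mathlib

section
/- For a random variable X with finite variance and mid-distribution function F^mid(x;X) = F(x;X) - 0.5·P(X=x), the expected value of F^mid(X;X) equals 1/2. -/
open MeasureTheory

private lemma swap_lemma (μ : Measure ℝ) [IsProbabilityMeasure μ] :
    ∫⁻ x, μ (Set.Ioi x) ∂μ = ∫⁻ x, μ (Set.Iio x) ∂μ := by
  have hset : MeasurableSet {p : ℝ × ℝ | p.1 < p.2} := measurableSet_lt measurable_fst measurable_snd
  have h1 : ∀ x : ℝ, μ (Set.Ioi x) = ∫⁻ y, {p : ℝ × ℝ | p.1 < p.2}.indicator 1 (x, y) ∂μ := by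
    intro x
    rw [show (fun y => {p : ℝ × ℝ | p.1 < p.2}.indicator 1 (x, y))
        = fun y => (Set.Ioi x).indicator (1 : ℝ → ENNReal) y from ?_]
    · rw [lintegral_indicator_one measurableSet_Ioi]
    · funext y
      by_cases h : x < y
      · simp [Set.indicator_of_mem, h, Set.mem_Ioi.mpr h]
      · simp [Set.indicator_of_notMem, h]
  have h2 : ∀ y : ℝ, μ (Set.Iio y) = ∫⁻ x, {p : ℝ × ℝ | p.1 < p.2}.indicator 1 (x, y) ∂μ := by
    intro y
    rw [show (fun x => {p : ℝ × ℝ | p.1 < p.2}.indicator 1 (x, y))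
        = fun x => (Set.Iio y).indicator (1 : ℝ → ENNReal) x from ?_]
    · rw [lintegral_indicator_one measurableSet_Iio]
    · funext x
      by_cases h : x < y
      · simp [Set.indicator_of_mem, h, Set.mem_Iio.mpr h]
      · simp [Set.indicator_of_notMem, h]
  calc ∫⁻ x, μ (Set.Ioi x) ∂μ
      = ∫⁻ x, ∫⁻ y, {p : ℝ × ℝ | p.1 < p.2}.indicator 1 (x, y) ∂μ ∂μ := by
        simp_rw [← h1]
    _ = ∫⁻ y, ∫⁻ x, {p : ℝ × ℝ | p.1 < p.2}.indicator 1 (x, y) ∂μ ∂μ := by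
        apply lintegral_lintegral_swap
        exact ((measurable_one.indicator hset).comp measurable_id).aemeasurable
    _ = ∫⁻ y, μ (Set.Iio y) ∂μ := by simp_rw [← h2]

/-- For a random variable X (with law `μ`) with finite variance, the expected value of
the mid-distribution transform `F^mid(x) = F(x) - 0.5 * P(X = x)` equals 1/2. -/
theorem expectation_midDistribution (μ : Measure ℝ) [IsProbabilityMeasure μ]
    (hvar : Integrable (fun x => x ^ 2) μ) :
    ∫ x, ((μ (Set.Iic x)).toReal - 0.5 * (μ {x}).toReal) ∂μ = 1 / 2 := by
  have hmic : Measurable fun x : ℝ => μ (Set.Iic x) :=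
    Monotone.measurable fun a b hab => measure_mono (Set.Iic_subset_Iic.2 hab)
  have hmio : Measurable fun x : ℝ => μ (Set.Iio x) :=
    Monotone.measurable fun a b hab => measure_mono (Set.Iio_subset_Iio hab)
  have hpt : ∀ x : ℝ, μ (Set.Iic x) = μ (Set.Iio x) + μ {x} := by
    intro x
    rw [← Set.Iio_union_right, measure_union (by simp) (measurableSet_singleton x)]
  have hms : Measurable fun x : ℝ => μ {x} := by
    have : (fun x : ℝ => μ {x}) = fun x => μ (Set.Iic x) - μ (Set.Iio x) := by
      funext x
      rw [hpt x, ENNReal.add_sub_cancel_left (measure_lt_top μ _).ne]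
    rw [this]; exact hmic.sub hmio
  set A := ∫⁻ x, μ (Set.Iio x) ∂μ with hA
  set B := ∫⁻ x, μ (Set.Iic x) ∂μ with hB
  set D := ∫⁻ x, μ {x} ∂μ with hD
  have hAle : A ≤ 1 := by
    calc A ≤ ∫⁻ _, 1 ∂μ := lintegral_mono fun x => prob_le_one
    _ = 1 := by simp
  have hBle : B ≤ 1 := by
    calc B ≤ ∫⁻ _, 1 ∂μ := lintegral_mono fun x => prob_le_one
    _ = 1 := by simp
  have hDle : D ≤ 1 := by
    calc D ≤ ∫⁻ _, 1 ∂μ := lintegral_mono fun x => prob_le_one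
    _ = 1 := by simp
  have hBAD : B = A + D := by
    rw [hB, hD, hA, ← lintegral_add_left hmio]
    exact lintegral_congr fun x => hpt x
  have hBA1 : B + A = 1 := by
    have : ∀ x : ℝ, μ (Set.Iic x) + μ (Set.Ioi x) = 1 := by
      intro x
      rw [← measure_union (by simp [Set.disjoint_left]) measurableSet_Ioi]
      simp
    calc B + A = B + ∫⁻ x, μ (Set.Ioi x) ∂μ := by rw [swap_lemma μ]
    _ = ∫⁻ x, (μ (Set.Iic x) + μ (Set.Ioi x)) ∂μ := (lintegral_add_left hmic _).symm
    _ = ∫⁻ _, (1 : ENNReal) ∂μ := lintegral_congr fun x => this x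
    _ = 1 := by simp
  -- integrability
  have hbound : ∀ (f : ℝ → ENNReal), Measurable f → (∀ x, f x ≤ 1) →
      Integrable (fun x => (f x).toReal) μ := by
    intro f hf hle
    refine (integrable_const (1 : ℝ)).mono' (hf.ennreal_toReal).aestronglyMeasurable ?_
    refine Filter.Eventually.of_forall fun x => ?_
    rw [Real.norm_eq_abs, abs_of_nonneg ENNReal.toReal_nonneg]
    exact ENNReal.toReal_le_of_le_ofReal one_pos.le (by simpa using hle x)
  have hif : Integrable (fun x => (μ (Set.Iic x)).toReal) μ :=
    hbound _ hmic fun x => prob_le_one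
  have hig : Integrable (fun x => (μ {x}).toReal) μ :=
    hbound _ hms fun x => prob_le_one
  have hintf : ∫ x, (μ (Set.Iic x)).toReal ∂μ = B.toReal := by
    rw [hB, integral_toReal hmic.aemeasurable
      (Filter.Eventually.of_forall fun x => measure_lt_top μ _)]
  have hintg : ∫ x, (μ {x}).toReal ∂μ = D.toReal := by
    rw [hD, integral_toReal hms.aemeasurable
      (Filter.Eventually.of_forall fun x => measure_lt_top μ _)]
  rw [integral_sub hif (hig.const_mul 0.5), MeasureTheory.integral_const_mul, hintf, hintg]
  -- now arithmetic in reals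
  have hAne : A ≠ ⊤ := (lt_of_le_of_lt hAle (by norm_num)).ne
  have hDne : D ≠ ⊤ := (lt_of_le_of_lt hDle (by norm_num)).ne
  have h1 : B.toReal = A.toReal + D.toReal := by
    rw [hBAD, ENNReal.toReal_add hAne hDne]
  have h2 : B.toReal + A.toReal = 1 := by
    rw [← ENNReal.toReal_add (lt_of_le_of_lt hBle (by norm_num)).ne hAne, hBA1]
    simp
  rw [h1]; linarith
end

section
/- For a discrete random variable X taking finitely many values x_1 < ... < x_m with probabilities p_1,...,p_m, the variance of F^mid(X;X) equals (1 - Σ_i p_i^3)/12. -/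
open Finset

/-- For a discrete random variable taking values `x 1 < ... < x m` with probabilities `p i`,
the variance of `F^mid(X;X)` equals `(1 - Σ p i ^ 3) / 12`.  Here
`Fmid i = Σ_{j ≤ i} p j - p i / 2` is the value of the mid-distribution transform at `x i`,
and the variance is `E[Fmid²] - (E[Fmid])²`. -/
theorem variance_midDistribution_discrete (m : ℕ) (x : Fin m → ℝ) (hx : StrictMono x)
    (p : Fin m → ℝ) (hp : ∀ i, 0 < p i) (hsum : ∑ i, p i = 1)
    (Fmid : Fin m → ℝ) (hF : ∀ i, Fmid i = (∑ j ∈ univ.filter (· ≤ i), p j) - p i / 2) :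
    (∑ i, p i * Fmid i ^ 2) - (∑ i, p i * Fmid i) ^ 2 = (1 - ∑ i, p i ^ 3) / 12 := by
  classical
  set q : ℕ → ℝ := fun k => if h : k < m then p ⟨k, h⟩ else 0 with hq
  set P : ℕ → ℝ := fun n => ∑ k ∈ range n, q k with hPdef
  have hq' : ∀ i : Fin m, q i.val = p i := by
    intro i; simp [hq, i.isLt]
  have hPsucc : ∀ k, P (k + 1) = P k + q k := fun k => Finset.sum_range_succ q k
  have hPm : P m = 1 := by
    simp only [hPdef]
    rw [← Fin.sum_univ_eq_sum_range q m]
    rw [Finset.sum_congr rfl fun i _ => hq' i]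
    exact hsum
  have hP0 : P 0 = 0 := by simp [hPdef]
  have h1 : ∀ i : Fin m, (∑ j ∈ univ.filter (· ≤ i), p j) = P (i.val + 1) := by
    intro i
    rw [Finset.sum_filter]
    have step : ∀ j : Fin m, (if j ≤ i then p j else 0)
        = (fun k => if k ≤ i.val then q k else 0) j.val := by
      intro j
      simp only [Fin.le_def, hq']
    rw [Finset.sum_congr rfl fun j _ => step j,
      Fin.sum_univ_eq_sum_range (fun k => if k ≤ i.val then q k else 0) m]
    simp only [hPdef]
    rw [show (∑ k ∈ range (i.val + 1), q k)
        = ∑ k ∈ range (i.val + 1), (if k ≤ i.val then q k else 0) from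
      Finset.sum_congr rfl fun k hk => by
        rw [if_pos (Nat.lt_succ_iff.mp (Finset.mem_range.mp hk))]]
    symm
    apply Finset.sum_subset
    · exact Finset.range_subset_range.2 i.isLt
    · intro k hk hk'
      rw [if_neg (fun h => hk' (Finset.mem_range.mpr (Nat.lt_succ_iff.mpr h)))]
  have hF' : ∀ i : Fin m, Fmid i = (P i.val + P (i.val + 1)) / 2 := by
    intro i
    rw [hF, h1, hPsucc, ← hq' i]; ring
  have e1 : (∑ i, p i * Fmid i)
      = ∑ k ∈ range m, q k * ((P k + P (k + 1)) / 2) := by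
    rw [← Fin.sum_univ_eq_sum_range (fun k => q k * ((P k + P (k + 1)) / 2)) m]
    exact Finset.sum_congr rfl fun i _ => by rw [hF' i, hq' i]
  have e2 : (∑ i, p i * Fmid i ^ 2)
      = ∑ k ∈ range m, q k * ((P k + P (k + 1)) / 2) ^ 2 := by
    rw [← Fin.sum_univ_eq_sum_range (fun k => q k * ((P k + P (k + 1)) / 2) ^ 2) m]
    exact Finset.sum_congr rfl fun i _ => by rw [hF' i, hq' i]
  have e3 : (∑ i, p i ^ 3) = ∑ k ∈ range m, q k ^ 3 := by
    rw [← Fin.sum_univ_eq_sum_range (fun k => q k ^ 3) m]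
    exact Finset.sum_congr rfl fun i _ => by rw [hq' i]
  have t1 : (∑ k ∈ range m, q k * ((P k + P (k + 1)) / 2)) = 1 / 2 := by
    have per : ∀ k, q k * ((P k + P (k + 1)) / 2)
        = (fun n => P n ^ 2 / 2) (k + 1) - (fun n => P n ^ 2 / 2) k := by
      intro k; simp only [hPsucc k]; ring
    rw [Finset.sum_congr rfl fun k _ => per k, Finset.sum_range_sub (fun n => P n ^ 2 / 2) m,
      hPm, hP0]
    norm_num
  have t2 : (∑ k ∈ range m, q k * ((P k + P (k + 1)) / 2) ^ 2)
      = 1 / 3 - (∑ k ∈ range m, q k ^ 3) / 12 := by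
    have per : ∀ k, q k * ((P k + P (k + 1)) / 2) ^ 2
        = ((fun n => P n ^ 3 / 3) (k + 1) - (fun n => P n ^ 3 / 3) k) - q k ^ 3 / 12 := by
      intro k; simp only [hPsucc k]; ring
    rw [Finset.sum_congr rfl fun k _ => per k, Finset.sum_sub_distrib,
      Finset.sum_range_sub (fun n => P n ^ 3 / 3) m, hPm, hP0, ← Finset.sum_div]
    norm_num
  rw [e1, e2, e3, t1, t2]
  ring
end

section
/- Under the random-effects model where θ̂_ℓ ~ N(θ, τ² + 1/n_ℓ) independently, the DerSimonian–Laird moment identity holds: E[Q] = (k-1) + τ²·(Σ_ℓ n_ℓ - Σ_ℓ n_ℓ²/Σ_ℓ n_ℓ), where Q = Σ_ℓ n_ℓ(θ̂_ℓ - θ̄_w)² and θ̄_w = Σ_ℓ n_ℓ θ̂_ℓ/Σ_ℓ n_ℓ. -/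
/-!
Writing `Y_ℓ = θ̂_ℓ - θ`, Cochran's `Q` equals `Σ n_ℓ Y_ℓ² - (Σ n_ℓ Y_ℓ)² / N` with
`N = Σ n_ℓ`, so `E[Q] = Σ n_ℓ Var θ̂_ℓ - Var(Σ n_ℓ θ̂_ℓ) / N`; this only needs a common mean.
Independence splits the variance of the weighted sum as `Σ n_ℓ² Var θ̂_ℓ`, and
`Var θ̂_ℓ = τ² + 1/n_ℓ` turns the two sums into `τ² N + k` and `τ² Σ n_ℓ² + N`.
-/

open MeasureTheory ProbabilityTheory Finset

section WeightedMean

variable {ι : Type*} [Fintype ι]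

lemma sum_mul_sub_sq (w x : ι → ℝ) (a : ℝ) :
    ∑ i, w i * (x i - a) ^ 2
      = ∑ i, w i * x i ^ 2 - 2 * a * ∑ i, w i * x i + a ^ 2 * ∑ i, w i := by
  simp only [mul_sum, ← sum_sub_distrib, ← sum_add_distrib]
  exact sum_congr rfl fun i _ => by ring

lemma sum_mul_sub_sq_weightedMean (w x : ι → ℝ) (c : ℝ) (hW : ∑ i, w i ≠ 0) :
    ∑ i, w i * (x i - (∑ j, w j * x j) / ∑ j, w j) ^ 2
      = ∑ i, w i * (x i - c) ^ 2 - (∑ j, w j * (x j - c)) ^ 2 / ∑ j, w j := by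
  have hcentre : ∑ j, w j * (x j - c) = ∑ j, w j * x j - (∑ j, w j) * c := by
    simp only [mul_sub, sum_sub_distrib, ← sum_mul]
  rw [sum_mul_sub_sq, sum_mul_sub_sq, hcentre]
  field_simp
  ring

variable {Ω : Type*} {mΩ : MeasurableSpace Ω} {μ : Measure Ω} {X : ι → Ω → ℝ}

lemma integral_sum_mul_sub_sq_weightedMean [IsProbabilityMeasure μ] {θ : ℝ} (w : ι → ℝ)
    (hW : ∑ i, w i ≠ 0) (hX : ∀ i, MemLp (X i) 2 μ) (hmean : ∀ i, μ[X i] = θ) :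
    ∫ ω, ∑ i, w i * (X i ω - (∑ j, w j * X j ω) / ∑ j, w j) ^ 2 ∂μ
      = ∑ i, w i * Var[X i; μ] - Var[fun ω => ∑ j, w j * X j ω; μ] / ∑ j, w j := by
  have hcentred : ∀ i, MemLp (fun ω => X i ω - θ) 2 μ := fun i => (hX i).sub (memLp_const θ)
  have hsum : MemLp (fun ω => ∑ j, w j * (X j ω - θ)) 2 μ :=
    memLp_finsetSum _ fun j _ => (hcentred j).const_mul (w j)
  have hvar : ∀ i, Var[X i; μ] = ∫ ω, (X i ω - θ) ^ 2 ∂μ := fun i => by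
    rw [variance_eq_integral (hX i).aemeasurable, hmean]
  have hvar_sum : Var[fun ω => ∑ j, w j * X j ω; μ] = ∫ ω, (∑ j, w j * (X j ω - θ)) ^ 2 ∂μ := by
    have hmean_sum : μ[fun ω => ∑ j, w j * X j ω] = ∑ j, w j * θ := by
      rw [integral_finsetSum _ fun j _ => ((hX j).integrable one_le_two).const_mul (w j)]
      simp only [integral_const_mul, hmean]
    rw [variance_eq_integral (memLp_finsetSum _ fun j _ => (hX j).const_mul (w j)).aemeasurable,
      hmean_sum]
    simp only [mul_sub, sum_sub_distrib]
  simp_rw [sum_mul_sub_sq_weightedMean w _ θ hW]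
  rw [integral_sub (integrable_finsetSum _ fun i _ => (hcentred i).integrable_sq.const_mul (w i))
    (hsum.integrable_sq.div_const (∑ j, w j)), integral_div,
    integral_finsetSum _ fun i _ => (hcentred i).integrable_sq.const_mul (w i), hvar_sum]
  simp only [integral_const_mul, hvar]

lemma variance_sum_const_mul_of_pairwise_indepFun (w : ι → ℝ) (hX : ∀ i, MemLp (X i) 2 μ)
    (hindep : Pairwise fun i j => X i ⟂ᵢ[μ] X j) :
    Var[fun ω => ∑ j, w j * X j ω; μ] = ∑ j, w j ^ 2 * Var[X j; μ] := by
  have h := IndepFun.variance_sum (X := fun j ω => w j * X j ω) (s := univ)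
    (fun j _ => (hX j).const_mul (w j))
    (fun i _ j _ hij => (hindep hij).comp (measurable_const_mul (w i)) (measurable_const_mul (w j)))
  simp only [variance_const_mul] at h
  rw [← h]
  congr 1
  ext ω
  simp

end WeightedMean

/-- DerSimonian–Laird moment identity: under the random-effects model where
`θ̂_ℓ ~ N(θ, τ² + 1/n_ℓ)` independently, Cochran's `Q = Σ n_ℓ (θ̂_ℓ - θ̄_w)²` with
`θ̄_w = Σ n_ℓ θ̂_ℓ / Σ n_ℓ` satisfies
`E[Q] = (k-1) + τ² (Σ n_ℓ - Σ n_ℓ² / Σ n_ℓ)`. -/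
theorem dersimonian_laird_moment {Ω : Type*} [MeasureSpace Ω]
    (μ : Measure Ω) [IsProbabilityMeasure μ]
    (k : ℕ) (hk : 2 ≤ k)
    (n : Fin k → ℝ) (hn : ∀ ℓ, 0 < n ℓ) (θ τ2 : ℝ) (hτ2 : 0 ≤ τ2)
    (θhat : Fin k → Ω → ℝ) (hmeas : ∀ ℓ, Measurable (θhat ℓ))
    (hindep : iIndepFun θhat μ)
    (hlaw : ∀ ℓ, μ.map (θhat ℓ) = gaussianReal θ (Real.toNNReal (τ2 + 1 / n ℓ))) :
    ∫ ω, ∑ ℓ, n ℓ * (θhat ℓ ω - (∑ j, n j * θhat j ω) / ∑ j, n j) ^ 2 ∂μ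
      = ((k : ℝ) - 1) + τ2 * ((∑ ℓ, n ℓ) - (∑ ℓ, (n ℓ) ^ 2) / ∑ ℓ, n ℓ) := by
  have hN : 0 < ∑ ℓ, n ℓ :=
    sum_pos (fun ℓ _ => hn ℓ) ⟨⟨0, by omega⟩, mem_univ _⟩
  have hHasLaw : ∀ ℓ, HasLaw (θhat ℓ) (gaussianReal θ (τ2 + 1 / n ℓ).toNNReal) μ :=
    fun ℓ => ⟨(hmeas ℓ).aemeasurable, hlaw ℓ⟩
  have hL2 : ∀ ℓ, MemLp (θhat ℓ) 2 μ := fun ℓ => (hHasLaw ℓ).hasGaussianLaw.memLp_two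
  have hvar : ∀ ℓ, Var[θhat ℓ; μ] = τ2 + 1 / n ℓ := fun ℓ => by
    have := hn ℓ
    rw [(hHasLaw ℓ).variance_eq, variance_id_gaussianReal, Real.coe_toNNReal _ (by positivity)]
  rw [integral_sum_mul_sub_sq_weightedMean n hN.ne' hL2
      (fun ℓ => by rw [(hHasLaw ℓ).integral_eq, integral_id_gaussianReal]),
    variance_sum_const_mul_of_pairwise_indepFun n hL2 (fun i j hij => hindep.indepFun hij)]
  have hlin : ∀ ℓ, n ℓ * Var[θhat ℓ; μ] = τ2 * n ℓ + 1 := fun ℓ => by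
    have := (hn ℓ).ne'
    rw [hvar]; field_simp
  have hquad : ∀ ℓ, n ℓ ^ 2 * Var[θhat ℓ; μ] = τ2 * n ℓ ^ 2 + n ℓ := fun ℓ => by
    have := (hn ℓ).ne'
    rw [hvar]; field_simp
  simp only [hlin, hquad, sum_add_distrib, ← mul_sum, sum_const, card_univ, Fintype.card_fin,
    nsmul_eq_mul, mul_one]
  field_simp
  ring
end
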